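/- Let ε > 0, let K be an n×n complex Hermitian matrix with 0 ≤ K ≤ 1 whose spectrum is ε-dense (for every x ∈ [0,1] there is an eigenvalue λ of K with |λ − x| < ε), and let F, G be d×d complex Hermitian matrices with 0 ≤ F ≤ 1 and 0 ≤ G ≤ 1. Then there exists a unitary (n+d)×(n+d) matrix u such that √2 · η(u·(K ⊕ F)·u†, K ⊕ G) ≤ 11·d·ε^{1/4}. -/

import Mathlib

open scoped Classical ComplexOrder Matrix

/-- The positive semidefinite square root of a positive semidefinite matrix
(junk value `0` if the matrix is not positive semidefinite). -/
noncomputable def msqrt {n : Type*} [Fintype n] [DecidableEq n]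
    (A : Matrix n n ℂ) : Matrix n n ℂ :=
  if h : A.PosSemidef then
    (h.1.eigenvectorUnitary : Matrix n n ℂ) *
      Matrix.diagonal ((↑) ∘ (Real.sqrt ·) ∘ h.1.eigenvalues) *
      (star h.1.eigenvectorUnitary : Matrix n n ℂ)
  else 0

/-- The Hilbert-Schmidt (Frobenius) norm of a matrix. -/
noncomputable def frob {n : Type*} [Fintype n]
    (M : Matrix n n ℂ) : ℝ :=
  Real.sqrt (∑ i, ∑ j, ‖M i j‖ ^ 2)

/-- `η(A,B) = ‖√(1−A)·√B − √A·√(1−B)‖₂`. -/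
noncomputable def eta {n : Type*} [Fintype n] [DecidableEq n]
    (A B : Matrix n n ℂ) : ℝ :=
  frob (msqrt (1 - A) * msqrt B - msqrt A * msqrt (1 - B))


open scoped MatrixOrder in
noncomputable def Matrix.PosSemidef.sqrt {m : Type*} [Fintype m] [DecidableEq m]
    {A : Matrix m m ℂ} (_h : A.PosSemidef) : Matrix m m ℂ := CFC.sqrt A

open scoped MatrixOrder in
lemma Matrix.PosSemidef.posSemidef_sqrt {m : Type*} [Fintype m] [DecidableEq m]
    {A : Matrix m m ℂ} (h : A.PosSemidef) : h.sqrt.PosSemidef :=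
  Matrix.nonneg_iff_posSemidef.mp (CFC.sqrt_nonneg A)

open scoped MatrixOrder in
lemma Matrix.PosSemidef.sqrt_mul_self {m : Type*} [Fintype m] [DecidableEq m]
    {A : Matrix m m ℂ} (h : A.PosSemidef) : h.sqrt * h.sqrt = A :=
  CFC.sqrt_mul_sqrt_self A (Matrix.nonneg_iff_posSemidef.mpr h)

open scoped MatrixOrder in
lemma Matrix.PosSemidef.eq_sqrt_of_sq_eq {m : Type*} [Fintype m] [DecidableEq m]
    {A B : Matrix m m ℂ} (hB : B.PosSemidef) (hA : A.PosSemidef) (h : B ^ 2 = A) :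
    B = hA.sqrt :=
  (CFC.sqrt_unique (by rw [← sq]; exact h) (Matrix.nonneg_iff_posSemidef.mpr hB)).symm

section Aux
variable {m : Type*} [Fintype m] [DecidableEq m]

open scoped MatrixOrder in
lemma msqrt_of_posSemidef {A : Matrix m m ℂ} (h : A.PosSemidef) : msqrt A = h.sqrt := by
  rw [msqrt, dif_pos h, Matrix.PosSemidef.sqrt,
    CFC.sqrt_eq_cfc, cfc_nnreal_eq_real _ A, h.1.cfc_eq,
    Matrix.IsHermitian.cfc, Unitary.conjStarAlgAut_apply]
  congr 3
  funext i
  simp [Real.coe_sqrt, h.eigenvalues_nonneg i]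

lemma posSemidef_diagonal_real {v : m → ℝ} (hv : ∀ i, 0 ≤ v i) :
    (Matrix.diagonal (fun i => (v i : ℂ))).PosSemidef :=
  Matrix.posSemidef_diagonal_iff.mpr fun i => Complex.zero_le_real.mpr (hv i)

lemma msqrt_diagonal {v : m → ℝ} (hv : ∀ i, 0 ≤ v i) :
    msqrt (Matrix.diagonal (fun i => (v i : ℂ)))
      = Matrix.diagonal (fun i => ((Real.sqrt (v i) : ℝ) : ℂ)) := by
  rw [msqrt_of_posSemidef (posSemidef_diagonal_real hv)]
  refine ((posSemidef_diagonal_real (fun i => Real.sqrt_nonneg (v i))).eq_sqrt_of_sq_eq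
    (posSemidef_diagonal_real hv) ?_).symm
  rw [pow_two, Matrix.diagonal_mul_diagonal]
  have : (fun i => ((Real.sqrt (v i) : ℝ) : ℂ) * ((Real.sqrt (v i) : ℝ) : ℂ))
      = fun i => ((v i : ℝ) : ℂ) := by
    funext i
    rw [← Complex.ofReal_mul, Real.mul_self_sqrt (hv i)]
  rw [this]

lemma one_sub_diagonal (v : m → ℝ) :
    (1 : Matrix m m ℂ) - Matrix.diagonal (fun i => (v i : ℂ))
      = Matrix.diagonal (fun i => ((1 - v i : ℝ) : ℂ)) := by
  rw [← Matrix.diagonal_one, Matrix.diagonal_sub]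
  congr 1
  funext i
  push_cast
  ring

lemma frob_diagonal (w : m → ℂ) :
    frob (Matrix.diagonal w) = Real.sqrt (∑ i, ‖w i‖ ^ 2) := by
  unfold frob
  congr 1
  refine Finset.sum_congr rfl fun i _ => ?_
  rw [Finset.sum_eq_single i]
  · simp
  · intro j _ hj
    simp [Matrix.diagonal_apply_ne' _ hj]
  · simp

lemma eta_diagonal {v w : m → ℝ} (hv0 : ∀ i, 0 ≤ v i) (hv1 : ∀ i, v i ≤ 1)
    (hw0 : ∀ i, 0 ≤ w i) (hw1 : ∀ i, w i ≤ 1) :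
    eta (Matrix.diagonal (fun i => (v i : ℂ))) (Matrix.diagonal (fun i => (w i : ℂ)))
      = Real.sqrt (∑ i, (Real.sqrt (1 - v i) * Real.sqrt (w i)
          - Real.sqrt (v i) * Real.sqrt (1 - w i)) ^ 2) := by
  unfold eta
  rw [one_sub_diagonal, one_sub_diagonal, msqrt_diagonal hv0, msqrt_diagonal hw0,
    msqrt_diagonal (fun i => by linarith [hv1 i]), msqrt_diagonal (fun i => by linarith [hw1 i]),
    Matrix.diagonal_mul_diagonal, Matrix.diagonal_mul_diagonal, Matrix.diagonal_sub, frob_diagonal]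
  congr 1
  refine Finset.sum_congr rfl fun i _ => ?_
  simp only [← Complex.ofReal_mul, ← Complex.ofReal_sub, Complex.norm_real,
    Real.norm_eq_abs, sq_abs]


lemma msqrt_conj {U A : Matrix m m ℂ} (hU2 : Uᴴ * U = 1) (hA : A.PosSemidef) :
    msqrt (U * A * Uᴴ) = U * msqrt A * Uᴴ := by
  have hA' : (U * A * Uᴴ).PosSemidef := hA.mul_mul_conjTranspose_same U
  rw [msqrt_of_posSemidef hA', msqrt_of_posSemidef hA]
  refine ((hA.posSemidef_sqrt.mul_mul_conjTranspose_same U).eq_sqrt_of_sq_eq hA' ?_).symm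
  rw [pow_two]
  calc U * hA.sqrt * Uᴴ * (U * hA.sqrt * Uᴴ)
      = U * (hA.sqrt * (Uᴴ * U) * hA.sqrt) * Uᴴ := by
        simp only [Matrix.mul_assoc]
    _ = U * A * Uᴴ := by rw [hU2, Matrix.mul_one, hA.sqrt_mul_self]

lemma frob_sq_eq_trace (M : Matrix m m ℂ) :
    ∑ i, ∑ j, ‖M i j‖ ^ 2 = ((Mᴴ * M).trace).re := by
  rw [Matrix.trace]
  rw [Complex.re_sum]
  rw [Finset.sum_comm]
  refine Finset.sum_congr rfl fun j _ => ?_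
  rw [Matrix.diag_apply, Matrix.mul_apply, Complex.re_sum]
  refine Finset.sum_congr rfl fun i _ => ?_
  simp [Matrix.conjTranspose_apply, ← Complex.normSq_eq_norm_sq,
    Complex.normSq_eq_conj_mul_self, Complex.normSq_apply]

lemma frob_conj {U : Matrix m m ℂ} (M : Matrix m m ℂ) (hU2 : Uᴴ * U = 1) :
    frob (U * M * Uᴴ) = frob M := by
  unfold frob
  rw [frob_sq_eq_trace, frob_sq_eq_trace M]
  congr 2
  have : (U * M * Uᴴ)ᴴ * (U * M * Uᴴ) = U * (Mᴴ * M) * Uᴴ := by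
    calc (U * M * Uᴴ)ᴴ * (U * M * Uᴴ) = U * (Mᴴ * ((Uᴴ * U) * M)) * Uᴴ := by
          simp only [Matrix.conjTranspose_mul, Matrix.conjTranspose_conjTranspose,
            Matrix.mul_assoc]
      _ = U * (Mᴴ * M) * Uᴴ := by rw [hU2, Matrix.one_mul]
  rw [this, Matrix.trace_mul_cycle, ← Matrix.mul_assoc, hU2, Matrix.one_mul]

lemma eta_conj {U A B : Matrix m m ℂ} (hU1 : U * Uᴴ = 1) (hU2 : Uᴴ * U = 1)
    (hA : A.PosSemidef) (hA1 : ((1 : Matrix m m ℂ) - A).PosSemidef)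
    (hB : B.PosSemidef) (hB1 : ((1 : Matrix m m ℂ) - B).PosSemidef) :
    eta (U * A * Uᴴ) (U * B * Uᴴ) = eta A B := by
  unfold eta
  have hone : ∀ C : Matrix m m ℂ, (1 : Matrix m m ℂ) - U * C * Uᴴ = U * (1 - C) * Uᴴ := by
    intro C
    rw [Matrix.mul_sub, Matrix.sub_mul, Matrix.mul_one, hU1]
  rw [hone, hone, msqrt_conj hU2 hA, msqrt_conj hU2 hB, msqrt_conj hU2 hA1, msqrt_conj hU2 hB1]
  have hprod : ∀ X Y : Matrix m m ℂ,
      (U * X * Uᴴ) * (U * Y * Uᴴ) = U * (X * Y) * Uᴴ := by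
    intro X Y
    calc U * X * Uᴴ * (U * Y * Uᴴ) = U * (X * ((Uᴴ * U) * Y)) * Uᴴ := by
          simp only [Matrix.mul_assoc]
      _ = _ := by rw [hU2, Matrix.one_mul, Matrix.mul_assoc]
  rw [hprod, hprod, ← Matrix.sub_mul, ← Matrix.mul_sub, frob_conj _ hU2]


lemma eigenvalues_mem_Icc {A : Matrix m m ℂ} (hA : A.PosSemidef)
    (hA1 : ((1 : Matrix m m ℂ) - A).PosSemidef) (i : m) :
    hA.1.eigenvalues i ∈ Set.Icc (0 : ℝ) 1 := by
  refine ⟨hA.eigenvalues_nonneg i, ?_⟩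
  set U : Matrix m m ℂ := (hA.1.eigenvectorUnitary : Matrix m m ℂ) with hUdef
  have hdiag : Uᴴ * A * U = Matrix.diagonal (RCLike.ofReal ∘ hA.1.eigenvalues) := by
    rw [← Matrix.star_eq_conjTranspose]
    have h := hA.1.conjStarAlgAut_star_eigenvectorUnitary
    rw [Unitary.conjStarAlgAut_star_apply] at h
    exact h
  have hU : Uᴴ * U = 1 := by
    rw [← Matrix.star_eq_conjTranspose]
    exact Matrix.mem_unitaryGroup_iff'.mp hA.1.eigenvectorUnitary.2
  have hpsd : (Uᴴ * ((1 : Matrix m m ℂ) - A) * U).PosSemidef :=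
    hA1.conjTranspose_mul_mul_same U
  have hEq : Uᴴ * ((1 : Matrix m m ℂ) - A) * U
      = Matrix.diagonal (fun j => ((1 - hA.1.eigenvalues j : ℝ) : ℂ)) := by
    rw [Matrix.mul_sub, Matrix.sub_mul, Matrix.mul_one, hU, hdiag]
    have : (RCLike.ofReal ∘ hA.1.eigenvalues : m → ℂ)
        = fun j => ((hA.1.eigenvalues j : ℝ) : ℂ) := rfl
    rw [this, one_sub_diagonal]
  have h0 := Matrix.posSemidef_diagonal_iff.mp (hEq ▸ hpsd) i
  have := Complex.zero_le_real.mp h0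
  linarith

lemma exists_unitary_eta_eq {n d : ℕ}
    (K : Matrix (Fin n) (Fin n) ℂ) (hK : K.PosSemidef) (hK1 : (1 - K).PosSemidef)
    (F : Matrix (Fin d) (Fin d) ℂ) (hF : F.PosSemidef) (hF1 : (1 - F).PosSemidef)
    (G : Matrix (Fin d) (Fin d) ℂ) (hG : G.PosSemidef) (hG1 : (1 - G).PosSemidef)
    (σ : Equiv.Perm (Fin n ⊕ Fin d)) :
    ∃ u ∈ Matrix.unitaryGroup (Fin n ⊕ Fin d) ℂ,
      eta (u * Matrix.fromBlocks K 0 0 F * uᴴ) (Matrix.fromBlocks K 0 0 G)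
        = Real.sqrt (∑ s : Fin n ⊕ Fin d,
            (Real.sqrt (1 - Sum.elim hK.1.eigenvalues hF.1.eigenvalues (σ s)) *
               Real.sqrt (Sum.elim hK.1.eigenvalues hG.1.eigenvalues s)
             - Real.sqrt (Sum.elim hK.1.eigenvalues hF.1.eigenvalues (σ s)) *
               Real.sqrt (1 - Sum.elim hK.1.eigenvalues hG.1.eigenvalues s)) ^ 2) := by
  classical
  set v : Fin n ⊕ Fin d → ℝ := Sum.elim hK.1.eigenvalues hF.1.eigenvalues with hvdef
  set w : Fin n ⊕ Fin d → ℝ := Sum.elim hK.1.eigenvalues hG.1.eigenvalues with hwdef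
  have hv0 : ∀ s, 0 ≤ v s := by
    rintro (i | j)
    · exact (eigenvalues_mem_Icc hK hK1 i).1
    · exact (eigenvalues_mem_Icc hF hF1 j).1
  have hv1 : ∀ s, v s ≤ 1 := by
    rintro (i | j)
    · exact (eigenvalues_mem_Icc hK hK1 i).2
    · exact (eigenvalues_mem_Icc hF hF1 j).2
  have hw0 : ∀ s, 0 ≤ w s := by
    rintro (i | j)
    · exact (eigenvalues_mem_Icc hK hK1 i).1
    · exact (eigenvalues_mem_Icc hG hG1 j).1
  have hw1 : ∀ s, w s ≤ 1 := by
    rintro (i | j)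
    · exact (eigenvalues_mem_Icc hK hK1 i).2
    · exact (eigenvalues_mem_Icc hG hG1 j).2
  set VK : Matrix (Fin n) (Fin n) ℂ := (hK.1.eigenvectorUnitary : Matrix (Fin n) (Fin n) ℂ)
  set VF : Matrix (Fin d) (Fin d) ℂ := (hF.1.eigenvectorUnitary : Matrix (Fin d) (Fin d) ℂ)
  set VG : Matrix (Fin d) (Fin d) ℂ := (hG.1.eigenvectorUnitary : Matrix (Fin d) (Fin d) ℂ)
  have hVKl : VKᴴ * VK = 1 := by
    rw [← Matrix.star_eq_conjTranspose]
    exact Matrix.mem_unitaryGroup_iff'.mp hK.1.eigenvectorUnitary.2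
  have hVKr : VK * VKᴴ = 1 := by
    rw [← Matrix.star_eq_conjTranspose]
    exact Matrix.mem_unitaryGroup_iff.mp hK.1.eigenvectorUnitary.2
  have hVFl : VFᴴ * VF = 1 := by
    rw [← Matrix.star_eq_conjTranspose]
    exact Matrix.mem_unitaryGroup_iff'.mp hF.1.eigenvectorUnitary.2
  have hVFr : VF * VFᴴ = 1 := by
    rw [← Matrix.star_eq_conjTranspose]
    exact Matrix.mem_unitaryGroup_iff.mp hF.1.eigenvectorUnitary.2
  have hVGl : VGᴴ * VG = 1 := by
    rw [← Matrix.star_eq_conjTranspose]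
    exact Matrix.mem_unitaryGroup_iff'.mp hG.1.eigenvectorUnitary.2
  have hVGr : VG * VGᴴ = 1 := by
    rw [← Matrix.star_eq_conjTranspose]
    exact Matrix.mem_unitaryGroup_iff.mp hG.1.eigenvectorUnitary.2
  set W1 : Matrix (Fin n ⊕ Fin d) (Fin n ⊕ Fin d) ℂ := Matrix.fromBlocks VK 0 0 VF with hW1def
  set W2 : Matrix (Fin n ⊕ Fin d) (Fin n ⊕ Fin d) ℂ := Matrix.fromBlocks VK 0 0 VG with hW2def
  have hW1H : W1ᴴ = Matrix.fromBlocks VKᴴ 0 0 VFᴴ := by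
    simp [hW1def, Matrix.fromBlocks_conjTranspose]
  have hW2H : W2ᴴ = Matrix.fromBlocks VKᴴ 0 0 VGᴴ := by
    simp [hW2def, Matrix.fromBlocks_conjTranspose]
  have hW1l : W1ᴴ * W1 = 1 := by
    rw [hW1H, hW1def, Matrix.fromBlocks_multiply]
    simp [hVKl, hVFl, Matrix.fromBlocks_one]
  have hW1r : W1 * W1ᴴ = 1 := by
    rw [hW1H, hW1def, Matrix.fromBlocks_multiply]
    simp [hVKr, hVFr, Matrix.fromBlocks_one]
  have hW2l : W2ᴴ * W2 = 1 := by
    rw [hW2H, hW2def, Matrix.fromBlocks_multiply]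
    simp [hVKl, hVGl, Matrix.fromBlocks_one]
  have hW2r : W2 * W2ᴴ = 1 := by
    rw [hW2H, hW2def, Matrix.fromBlocks_multiply]
    simp [hVKr, hVGr, Matrix.fromBlocks_one]
  have hKspec : K = VK * Matrix.diagonal (fun i => ((hK.1.eigenvalues i : ℝ) : ℂ)) * VKᴴ := by
    rw [← Matrix.star_eq_conjTranspose]; exact hK.1.spectral_theorem
  have hFspec : F = VF * Matrix.diagonal (fun i => ((hF.1.eigenvalues i : ℝ) : ℂ)) * VFᴴ := by
    rw [← Matrix.star_eq_conjTranspose]; exact hF.1.spectral_theorem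
  have hGspec : G = VG * Matrix.diagonal (fun i => ((hG.1.eigenvalues i : ℝ) : ℂ)) * VGᴴ := by
    rw [← Matrix.star_eq_conjTranspose]; exact hG.1.spectral_theorem
  have hKF : Matrix.fromBlocks K 0 0 F = W1 * Matrix.diagonal (fun s => ((v s : ℝ) : ℂ)) * W1ᴴ := by
    have e1 : (fun s => ((v s : ℝ) : ℂ))
        = Sum.elim (fun i => ((hK.1.eigenvalues i : ℝ) : ℂ)) (fun j => ((hF.1.eigenvalues j : ℝ) : ℂ)) := by
      funext s; cases s <;> rfl
    rw [e1, ← Matrix.fromBlocks_diagonal, hW1H, hW1def, Matrix.fromBlocks_multiply,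
      Matrix.fromBlocks_multiply]
    simp only [Matrix.fromBlocks_multiply, Matrix.mul_zero, Matrix.zero_mul, zero_add,
      add_zero, Matrix.mul_one, Matrix.one_mul]
    rw [← hKspec, ← hFspec]
  have hKG : Matrix.fromBlocks K 0 0 G = W2 * Matrix.diagonal (fun s => ((w s : ℝ) : ℂ)) * W2ᴴ := by
    have e1 : (fun s => ((w s : ℝ) : ℂ))
        = Sum.elim (fun i => ((hK.1.eigenvalues i : ℝ) : ℂ)) (fun j => ((hG.1.eigenvalues j : ℝ) : ℂ)) := by
      funext s; cases s <;> rfl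
    rw [e1, ← Matrix.fromBlocks_diagonal, hW2H, hW2def, Matrix.fromBlocks_multiply,
      Matrix.fromBlocks_multiply]
    simp only [Matrix.fromBlocks_multiply, Matrix.mul_zero, Matrix.zero_mul, zero_add,
      add_zero, Matrix.mul_one, Matrix.one_mul]
    rw [← hKspec, ← hGspec]
  set P : Matrix (Fin n ⊕ Fin d) (Fin n ⊕ Fin d) ℂ := (1 : Matrix _ _ ℂ).submatrix σ id with hPdef
  have hPH : Pᴴ = (1 : Matrix (Fin n ⊕ Fin d) (Fin n ⊕ Fin d) ℂ).submatrix id σ := by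
    rw [hPdef, Matrix.conjTranspose_submatrix, Matrix.conjTranspose_one]
  have hPmulL : ∀ M : Matrix (Fin n ⊕ Fin d) (Fin n ⊕ Fin d) ℂ,
      P * M = M.submatrix σ id := by
    intro M
    have := Matrix.one_submatrix_mul (σ : (Fin n ⊕ Fin d) → (Fin n ⊕ Fin d)) (Equiv.refl _) M
    simpa [hPdef] using this
  have hPmulR : ∀ M : Matrix (Fin n ⊕ Fin d) (Fin n ⊕ Fin d) ℂ,
      M * Pᴴ = M.submatrix id σ := by
    intro M
    rw [hPH]
    have := Matrix.mul_submatrix_one (Equiv.refl (Fin n ⊕ Fin d))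
      (σ : (Fin n ⊕ Fin d) → (Fin n ⊕ Fin d)) M
    simpa using this
  have hPdiag : ∀ c : (Fin n ⊕ Fin d) → ℂ,
      P * Matrix.diagonal c * Pᴴ = Matrix.diagonal (c ∘ σ) := by
    intro c
    rw [hPmulL, hPmulR, Matrix.submatrix_submatrix]
    simpa using Matrix.submatrix_diagonal_equiv c σ
  have hPr : P * Pᴴ = 1 := by
    rw [hPmulR, hPdef, Matrix.submatrix_submatrix]
    simpa using Matrix.submatrix_one_equiv (σ.trans (Equiv.refl _))
  have hPl : Pᴴ * P = 1 := mul_eq_one_comm.mp hPr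
  refine ⟨W2 * P * W1ᴴ, ?_, ?_⟩
  · rw [Matrix.mem_unitaryGroup_iff, Matrix.star_eq_conjTranspose]
    calc W2 * P * W1ᴴ * (W2 * P * W1ᴴ)ᴴ
        = W2 * (P * ((W1ᴴ * W1ᴴᴴ) * (Pᴴ * W2ᴴ))) := by
          simp only [Matrix.conjTranspose_mul, Matrix.mul_assoc]
      _ = 1 := by
          rw [Matrix.conjTranspose_conjTranspose, hW1l, Matrix.one_mul,
            ← Matrix.mul_assoc P Pᴴ W2ᴴ, hPr, Matrix.one_mul, hW2r]
  · have huH : (W2 * P * W1ᴴ)ᴴ = W1 * (Pᴴ * W2ᴴ) := by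
      simp only [Matrix.conjTranspose_mul, Matrix.conjTranspose_conjTranspose, Matrix.mul_assoc]
    have hconj : W2 * P * W1ᴴ * Matrix.fromBlocks K 0 0 F * (W2 * P * W1ᴴ)ᴴ
        = W2 * Matrix.diagonal (fun s => ((v (σ s) : ℝ) : ℂ)) * W2ᴴ := by
      rw [huH, hKF]
      calc W2 * P * W1ᴴ * (W1 * Matrix.diagonal (fun s => ((v s : ℝ) : ℂ)) * W1ᴴ)
            * (W1 * (Pᴴ * W2ᴴ))
          = W2 * (P * ((W1ᴴ * W1) * (Matrix.diagonal (fun s => ((v s : ℝ) : ℂ))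
              * ((W1ᴴ * W1) * (Pᴴ * W2ᴴ))))) := by
            simp only [Matrix.mul_assoc]
        _ = W2 * (P * (Matrix.diagonal (fun s => ((v s : ℝ) : ℂ)) * (Pᴴ * W2ᴴ))) := by
            rw [hW1l, Matrix.one_mul, Matrix.one_mul]
        _ = W2 * ((P * Matrix.diagonal (fun s => ((v s : ℝ) : ℂ)) * Pᴴ) * W2ᴴ) := by
            simp only [Matrix.mul_assoc]
        _ = W2 * Matrix.diagonal (fun s => ((v (σ s) : ℝ) : ℂ)) * W2ᴴ := by
            rw [hPdiag]
            simp only [Matrix.mul_assoc]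
            rfl
    rw [hconj, hKG]
    rw [eta_conj hW2r hW2l (posSemidef_diagonal_real (fun s => hv0 (σ s)))
      (by rw [one_sub_diagonal]; exact posSemidef_diagonal_real (fun s => by linarith [hv1 (σ s)]))
      (posSemidef_diagonal_real hw0)
      (by rw [one_sub_diagonal]; exact posSemidef_diagonal_real (fun s => by linarith [hw1 s]))]
    rw [eta_diagonal (fun s => hv0 (σ s)) (fun s => hv1 (σ s)) hw0 hw1]

end Aux

section Trig
open Real

noncomputable def ang (x : ℝ) : ℝ := Real.arcsin (Real.sqrt x)

lemma ang_mem {x : ℝ} (h0 : 0 ≤ x) : ang x ∈ Set.Icc 0 (π / 2) :=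
  ⟨Real.arcsin_nonneg.mpr (Real.sqrt_nonneg x), Real.arcsin_le_pi_div_two _⟩

lemma sin_ang {x : ℝ} (h0 : 0 ≤ x) (h1 : x ≤ 1) : Real.sin (ang x) = Real.sqrt x :=
  Real.sin_arcsin (by linarith [Real.sqrt_nonneg x]) (Real.sqrt_le_one.mpr h1)

lemma cos_ang {x : ℝ} (h0 : 0 ≤ x) : Real.cos (ang x) = Real.sqrt (1 - x) := by
  rw [ang, Real.cos_arcsin, Real.sq_sqrt h0]

lemma hfun_eq {a b : ℝ} (ha0 : 0 ≤ a) (ha1 : a ≤ 1) (hb0 : 0 ≤ b) (hb1 : b ≤ 1) :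
    Real.sqrt (1 - a) * Real.sqrt b - Real.sqrt a * Real.sqrt (1 - b)
      = Real.sin (ang b - ang a) := by
  rw [Real.sin_sub, sin_ang hb0 hb1, sin_ang ha0 ha1, cos_ang ha0, cos_ang hb0]
  ring

lemma hfun_abs_le_one {a b : ℝ} (ha0 : 0 ≤ a) (ha1 : a ≤ 1) (hb0 : 0 ≤ b) (hb1 : b ≤ 1) :
    |Real.sqrt (1 - a) * Real.sqrt b - Real.sqrt a * Real.sqrt (1 - b)| ≤ 1 := by
  rw [hfun_eq ha0 ha1 hb0 hb1]
  exact Real.abs_sin_le_one _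

lemma hfun_abs_le_ang {a b : ℝ} (ha0 : 0 ≤ a) (ha1 : a ≤ 1) (hb0 : 0 ≤ b) (hb1 : b ≤ 1) :
    |Real.sqrt (1 - a) * Real.sqrt b - Real.sqrt a * Real.sqrt (1 - b)|
      ≤ |ang b - ang a| := by
  rw [hfun_eq ha0 ha1 hb0 hb1]
  exact Real.abs_sin_le_abs

lemma sin_sq_sub_sin_sq (θ ψ : ℝ) :
    Real.sin θ ^ 2 - Real.sin ψ ^ 2 = Real.sin (θ + ψ) * Real.sin (θ - ψ) := by
  rw [Real.sin_add, Real.sin_sub]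
  have hθ := Real.sin_sq_add_cos_sq θ
  have hψ := Real.sin_sq_add_cos_sq ψ
  nlinarith [hθ, hψ]

lemma sin_sq_spread_aux {θ ψ : ℝ} (hψ0 : 0 ≤ ψ) (hψθ : ψ ≤ θ) (hθ : θ ≤ π / 2) :
    (2 / π) ^ 2 * (θ - ψ) ^ 2 ≤ Real.sin θ ^ 2 - Real.sin ψ ^ 2 := by
  have hpi := Real.pi_pos
  have h2 : 2 / π * (θ - ψ) ≤ Real.sin (θ - ψ) :=
    Real.mul_le_sin (by linarith) (by linarith)
  have h1 : 2 / π * (θ - ψ) ≤ Real.sin (θ + ψ) := by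
    rcases le_or_gt (θ + ψ) (π / 2) with h | h
    · calc 2 / π * (θ - ψ) ≤ 2 / π * (θ + ψ) := by
            have : 0 < 2 / π := by positivity
            nlinarith
        _ ≤ Real.sin (θ + ψ) := Real.mul_le_sin (by linarith) h
    · rw [← Real.sin_pi_sub]
      calc 2 / π * (θ - ψ) ≤ 2 / π * (π - (θ + ψ)) := by
            have : 0 < 2 / π := by positivity
            nlinarith
        _ ≤ Real.sin (π - (θ + ψ)) := Real.mul_le_sin (by linarith) (by linarith)
  have hnn : 0 ≤ 2 / π * (θ - ψ) := by
    have : 0 < 2 / π := by positivity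
    nlinarith
  rw [sin_sq_sub_sin_sq]
  calc (2 / π) ^ 2 * (θ - ψ) ^ 2 = (2 / π * (θ - ψ)) * (2 / π * (θ - ψ)) := by ring
    _ ≤ Real.sin (θ + ψ) * Real.sin (θ - ψ) := mul_le_mul h1 h2 hnn (le_trans hnn h1)

lemma sin_sq_spread {θ ψ : ℝ} (hθ : θ ∈ Set.Icc 0 (π / 2)) (hψ : ψ ∈ Set.Icc 0 (π / 2)) :
    (2 / π) ^ 2 * (θ - ψ) ^ 2 ≤ |Real.sin θ ^ 2 - Real.sin ψ ^ 2| := by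
  rcases le_total ψ θ with h | h
  · calc (2 / π) ^ 2 * (θ - ψ) ^ 2 ≤ Real.sin θ ^ 2 - Real.sin ψ ^ 2 :=
        sin_sq_spread_aux hψ.1 h hθ.2
      _ ≤ _ := le_abs_self _
  · rw [abs_sub_comm]
    calc (2 / π) ^ 2 * (θ - ψ) ^ 2 = (2 / π) ^ 2 * (ψ - θ) ^ 2 := by ring
      _ ≤ Real.sin ψ ^ 2 - Real.sin θ ^ 2 := sin_sq_spread_aux hθ.1 h hψ.2
      _ ≤ _ := le_abs_self _

end Trig

section Core
open Real

section PermHelper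
variable {β : Type*} [DecidableEq β]

lemma prod_formPerm_apply_of_not_mem (ls : List (List β)) {x : β}
    (hx : ∀ l ∈ ls, x ∉ l) : (ls.map List.formPerm).prod x = x := by
  induction ls with
  | nil => simp
  | cons hd tl ih =>
    rw [List.map_cons, List.prod_cons, Equiv.Perm.mul_apply]
    rw [ih (fun l hl => hx l (List.mem_cons_of_mem _ hl))]
    exact List.formPerm_apply_of_notMem (hx hd List.mem_cons_self)

lemma prod_formPerm_apply_of_mem (ls : List (List β))
    (hdisj : ls.Pairwise List.Disjoint)
    {l : List β} (hl : l ∈ ls) {x : β} (hx : x ∈ l) :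
    (ls.map List.formPerm).prod x = l.formPerm x := by
  induction ls with
  | nil => simp at hl
  | cons hd tl ih =>
    rw [List.map_cons, List.prod_cons, Equiv.Perm.mul_apply]
    rcases List.mem_cons.mp hl with rfl | hl'
    · rw [prod_formPerm_apply_of_not_mem tl
        (fun l' hl' => (List.pairwise_cons.mp hdisj).1 l' hl' hx)]
    · rw [ih (List.pairwise_cons.mp hdisj).2 hl']
      have hmem : l.formPerm x ∈ l := List.formPerm_apply_mem_of_mem hx
      have hx2 : l.formPerm x ∉ hd := fun hc =>
        (List.pairwise_cons.mp hdisj).1 l hl' hc hmem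
      exact List.formPerm_apply_of_notMem hx2

end PermHelper

lemma core_perm {n d : ℕ} (hd : 0 < d) {δ : ℝ} (hδ : 0 < δ)
    (hL : 3 * (d : ℝ) * δ ≤ π / 2)
    (α : Fin n → ℝ)
    (hdense : ∀ ψ ∈ Set.Icc (0 : ℝ) (π / 2), ∃ i, |α i - ψ| < δ)
    (a b : Fin d → ℝ) (ha : ∀ j, a j ∈ Set.Icc (0 : ℝ) (π / 2))
    (hb : ∀ j, b j ∈ Set.Icc (0 : ℝ) (π / 2)) :
    ∃ σ : Equiv.Perm (Fin n ⊕ Fin d),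
      ∑ s : Fin n ⊕ Fin d, (Sum.elim α a (σ s) - Sum.elim α b s) ^ 2
        ≤ 32 * (d : ℝ) ^ 3 * δ ^ 2 + 25 * π * (d : ℝ) ^ 2 * δ / 6 := by
  classical
  have hpi := Real.pi_pos
  set H : ℝ := 3 * δ with hHdef
  set L : ℝ := (d : ℝ) * H with hLdef
  have hH : 0 < H := by positivity
  have hdR : (0 : ℝ) < (d : ℝ) := by exact_mod_cast hd
  have hLpos : 0 < L := by positivity
  have hLle : L ≤ π / 2 := by
    have h1 : L = 3 * (d : ℝ) * δ := by rw [hLdef, hHdef]; ring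
    linarith [h1.le]
  clear_value H L
  set p : Fin d → ℤ → ℝ := fun j k => (k : ℝ) * L + (j : ℝ) * H with hpdef
  have hform : ∀ (j : Fin d) (k : ℤ), p j k = (((j : ℤ) + d * k : ℤ) : ℝ) * H := by
    intro j k
    simp only [hpdef, hLdef]
    push_cast
    ring
  clear_value p
  have hpsep : ∀ (j j' : Fin d) (k k' : ℤ), (j, k) ≠ (j', k') →
      H ≤ |p j k - p j' k'| := by
    intro j j' k k' hne
    have hNne : (j : ℤ) + d * k ≠ (j' : ℤ) + d * k' := by
      intro hEq
      apply hne
      have hjd : ((j : ℕ) : ℤ) < (d : ℤ) := by exact_mod_cast j.2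
      have hjd' : ((j' : ℕ) : ℤ) < (d : ℤ) := by exact_mod_cast j'.2
      have hsub : ((j : ℕ) : ℤ) - ((j' : ℕ) : ℤ) = d * (k' - k) := by linear_combination hEq
      have hdvd : ((d : ℕ) : ℤ) ∣ (((j : ℕ) : ℤ) - ((j' : ℕ) : ℤ)) := ⟨k' - k, hsub⟩
      have hz : (((j : ℕ) : ℤ) - ((j' : ℕ) : ℤ)) = 0 := by
        refine Int.eq_zero_of_abs_lt_dvd hdvd ?_
        rw [abs_lt]
        omega
      have hjj : j = j' := by
        apply Fin.ext
        omega
      have hkk : k = k' := by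
        subst hjj
        have hd' : ((d : ℕ) : ℤ) ≠ 0 := by exact_mod_cast hd.ne'
        have h2 : (d : ℤ) * k = (d : ℤ) * k' := by omega
        exact mul_left_cancel₀ hd' h2
      rw [hjj, hkk]
    have hge1 : (1 : ℤ) ≤ |((j : ℤ) + d * k) - ((j' : ℤ) + d * k')| :=
      Int.one_le_abs (by omega)
    have hgeR : (1 : ℝ) ≤ |(((j : ℤ) + d * k : ℤ) : ℝ) - (((j' : ℤ) + d * k' : ℤ) : ℝ)| := by
      exact_mod_cast hge1
    rw [hform, hform, ← sub_mul, abs_mul, abs_of_pos hH]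
    calc H = 1 * H := (one_mul H).symm
      _ ≤ _ := mul_le_mul_of_nonneg_right hgeR hH.le
  have hmono : ∀ (j : Fin d) (k k' : ℤ), k ≤ k' → p j k ≤ p j k' := by
    intro j k k' hkk'
    simp only [hpdef]
    have hcast : (k : ℝ) ≤ (k' : ℝ) := by exact_mod_cast hkk'
    have := mul_le_mul_of_nonneg_right hcast hLpos.le
    linarith
  have hlattice : ∀ (j : Fin d), ∀ x ∈ Set.Icc (0 : ℝ) (π / 2),
      ∃ k : ℤ, p j k ∈ Set.Icc (0 : ℝ) (π / 2) ∧ |p j k - x| ≤ L := by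
    intro j x hx
    set q : ℤ := ⌊(x - (j : ℝ) * H) / L⌋ with hq
    have hfl := Int.floor_le ((x - (j : ℝ) * H) / L)
    have hfl2 := Int.lt_floor_add_one ((x - (j : ℝ) * H) / L)
    have hy1 : p j q ≤ x := by
      simp only [hpdef]
      have := mul_le_mul_of_nonneg_right hfl hLpos.le
      rw [div_mul_cancel₀ _ hLpos.ne'] at this
      linarith
    have hy2 : x < p j q + L := by
      simp only [hpdef]
      have := mul_lt_mul_of_pos_right hfl2 hLpos
      rw [add_mul, one_mul, div_mul_cancel₀ _ hLpos.ne'] at this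
      linarith
    have hstep : p j (q + 1) = p j q + L := by simp only [hpdef]; push_cast; ring
    rcases le_or_gt 0 (p j q) with h0 | h0
    · exact ⟨q, ⟨h0, le_trans hy1 hx.2⟩,
        by rw [abs_sub_comm, abs_of_nonneg (by linarith)]; linarith⟩
    · refine ⟨q + 1, ⟨by rw [hstep]; linarith [hx.1], by rw [hstep]; linarith⟩, ?_⟩
      rw [hstep, abs_of_nonneg (by linarith)]
      linarith
  have hka := fun j => hlattice j (a j) (ha j)
  have hkb := fun j => hlattice j (b j) (hb j)
  choose ka hkaI hkaC using hka
  choose kb hkbI hkbC using hkb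
  set m : Fin d → ℕ := fun j => (ka j - kb j).natAbs with hmdef
  set kk : Fin d → ℕ → ℤ := fun j t => if kb j ≤ ka j then kb j + t else kb j - t with hkkdef
  clear_value m kk
  have hkk0 : ∀ j, kk j 0 = kb j := by
    intro j; simp only [hkkdef]; split <;> simp
  have hkkm : ∀ j, kk j (m j) = ka j := by
    intro j; simp only [hkkdef, hmdef]; split <;> omega
  have hkkstep : ∀ j t, |p j (kk j (t + 1)) - p j (kk j t)| = L := by
    intro j t
    have hd1 : kk j (t + 1) - kk j t = 1 ∨ kk j (t + 1) - kk j t = -1 := by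
      simp only [hkkdef]; split <;> [left; right] <;> push_cast <;> ring
    have hdiff : p j (kk j (t + 1)) - p j (kk j t)
        = ((kk j (t + 1) - kk j t : ℤ) : ℝ) * L := by
      simp only [hpdef]; push_cast; ring
    rcases hd1 with h | h <;> rw [hdiff, h]
    · rw [Int.cast_one, one_mul, abs_of_pos hLpos]
    · rw [Int.cast_neg, Int.cast_one, neg_mul, one_mul, abs_neg, abs_of_pos hLpos]
  have hkkmem : ∀ j t, t ≤ m j → p j (kk j t) ∈ Set.Icc (0 : ℝ) (π / 2) := by
    intro j t ht
    have h1 : min (kb j) (ka j) ≤ kk j t := by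
      simp only [hkkdef, hmdef] at *; split <;> omega
    have h2 : kk j t ≤ max (kb j) (ka j) := by
      simp only [hkkdef, hmdef] at *; split <;> omega
    constructor
    · rcases le_total (kb j) (ka j) with h | h
      · exact le_trans (hkbI j).1 (hmono j _ _ (by omega))
      · exact le_trans (hkaI j).1 (hmono j _ _ (by omega))
    · rcases le_total (kb j) (ka j) with h | h
      · exact le_trans (hmono j _ _ (by omega)) (hkaI j).2
      · exact le_trans (hmono j _ _ (by omega)) (hkbI j).2
  have hmL : ∀ j, (m j : ℝ) * L ≤ π / 2 := by
    intro j
    have hdiff : p j (ka j) - p j (kb j) = ((ka j - kb j : ℤ) : ℝ) * L := by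
      simp only [hpdef]; push_cast; ring
    have habs : (m j : ℝ) * L = |p j (ka j) - p j (kb j)| := by
      rw [hdiff, abs_mul, abs_of_pos hLpos, hmdef]
      congr 1
      rw [Nat.cast_natAbs, Int.cast_abs]
    rw [habs]
    rw [abs_sub_le_iff]
    constructor
    · linarith [(hkaI j).2, (hkbI j).1]
    · linarith [(hkbI j).2, (hkaI j).1]
    -- choose eigenvalue approximations of lattice points
  have hnemp : Nonempty (Fin n) := by
    obtain ⟨i, -⟩ := hdense 0 ⟨le_refl 0, by positivity⟩
    exact ⟨i⟩
  have hsel : ∀ (j : Fin d) (t : ℕ), ∃ i : Fin n, t ≤ m j → |α i - p j (kk j t)| < δ := by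
    intro j t
    by_cases ht : t ≤ m j
    · obtain ⟨i, hi⟩ := hdense _ (hkkmem j t ht)
      exact ⟨i, fun _ => hi⟩
    · exact ⟨Classical.arbitrary (Fin n), fun h => absurd h ht⟩
  choose E hE using hsel
  have hEsep : ∀ (j j' : Fin d) (t t' : ℕ), t ≤ m j → t' ≤ m j' → (j, t) ≠ (j', t') →
      E j t ≠ E j' t' := by
    intro j j' t t' ht ht' hne' hEq
    have h1 := hE j t ht
    have h2 := hE j' t' ht'
    have hkne : (j, kk j t) ≠ (j', kk j' t') := by
      intro hc
      apply hne'
      have hj : j = j' := congrArg Prod.fst hc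
      subst hj
      have hk : kk j t = kk j t' := congrArg Prod.snd hc
      have htt : t = t' := by
        simp only [hkkdef] at hk
        split_ifs at hk <;> omega
      rw [htt]
    have hsep := hpsep j j' (kk j t) (kk j' t') hkne
    rw [hEq] at h1
    have hlt : |p j (kk j t) - p j' (kk j' t')| < 2 * δ := by
      calc |p j (kk j t) - p j' (kk j' t')|
          ≤ |p j (kk j t) - α (E j' t')| + |α (E j' t') - p j' (kk j' t')| :=
            abs_sub_le _ _ _
        _ < 2 * δ := by
            rw [abs_sub_comm]
            linarith [h1, h2]
    rw [hHdef] at hsep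
    linarith
  -- the chain lists
  set l : Fin d → List (Fin n ⊕ Fin d) :=
    fun j => Sum.inr j :: (List.range (m j + 1)).map (fun t => Sum.inl (E j t)) with hldef
  have hlnodup : ∀ j, (l j).Nodup := by
    intro j
    simp only [hldef]
    rw [List.nodup_cons]
    refine ⟨by simp, ?_⟩
    refine List.Nodup.map_on ?_ List.nodup_range
    intro t ht t' ht' hEq
    by_contra hne'
    exact hEsep j j t t' (Nat.lt_succ_iff.mp (List.mem_range.mp ht))
      (Nat.lt_succ_iff.mp (List.mem_range.mp ht'))
      (by simp [hne']) (Sum.inl.inj hEq)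
  have hmem_inr : ∀ j, Sum.inr j ∈ l j := by
    intro j; simp [hldef]
  have hldisj : ∀ j j', j ≠ j' → (l j).Disjoint (l j') := by
    intro j j' hjj x hx hx'
    simp only [hldef, List.mem_cons, List.mem_map, List.mem_range] at hx hx'
    rcases hx with rfl | ⟨t, ht, rfl⟩
    · rcases hx' with h | ⟨t', ht', h⟩
      · exact hjj (Sum.inr.inj h.symm).symm
      · simp at h
    · rcases hx' with h | ⟨t', ht', h⟩
      · simp at h
      · exact hEsep j' j t' t (Nat.lt_succ_iff.mp ht') (Nat.lt_succ_iff.mp ht)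
          (by simp [Ne.symm hjj]) (Sum.inl.inj h)
  set ls : List (List (Fin n ⊕ Fin d)) := (List.finRange d).map l with hlsdef
  have hlsdisj : ls.Pairwise List.Disjoint := by
    rw [hlsdef]
    exact List.Pairwise.map _ (fun {j j'} h => hldisj j j' h) (List.nodup_finRange d)
  set σ : Equiv.Perm (Fin n ⊕ Fin d) := (ls.map List.formPerm).prod with hσdef
  refine ⟨σ, ?_⟩
  set f : (Fin n ⊕ Fin d) → ℝ := fun s => (Sum.elim α a (σ s) - Sum.elim α b s) ^ 2 with hfdef
  have hσl : ∀ j, ∀ x ∈ l j, σ x = (l j).formPerm x := by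
    intro j x hx
    rw [hσdef]
    exact prod_formPerm_apply_of_mem ls hlsdisj
      (by rw [hlsdef]; exact List.mem_map_of_mem (f := l) (List.mem_finRange j)) hx
  have hoff : ∀ s, (∀ j, s ∉ l j) → f s = 0 := by
    intro s hs
    have hσs : σ s = s := by
      rw [hσdef]
      apply prod_formPerm_apply_of_not_mem
      intro l' hl'
      rw [hlsdef] at hl'
      obtain ⟨j, -, rfl⟩ := List.mem_map.mp hl'
      exact hs j
    rcases s with i | j
    · simp [hfdef, hσs]
    · exact absurd (hmem_inr j) (hs j)
  -- evaluate the permutation along each chain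
  have hllen : ∀ j, (l j).length = m j + 2 := by
    intro j; simp [hldef]
  have hget0 : ∀ j, (l j)[0]'(by rw [hllen]; omega) = Sum.inr j := by
    intro j; simp [hldef]
  have hgett : ∀ j (t : ℕ) (ht : t < m j + 1),
      (l j)[t + 1]'(by rw [hllen]; omega) = Sum.inl (E j t) := by
    intro j t ht; simp [hldef]
  have hσ_inr : ∀ j, σ (Sum.inr j) = Sum.inl (E j 0) := by
    intro j
    rw [hσl j _ (hmem_inr j)]
    have h := List.formPerm_apply_getElem (l j) (hlnodup j) 0 (by rw [hllen]; omega)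
    rw [hget0 j] at h
    rw [h]
    have h1 : (0 + 1) % (l j).length = 1 := by
      rw [hllen]; exact Nat.mod_eq_of_lt (by omega)
    have := hgett j 0 (by omega)
    simp_rw [h1]
    simpa using this
  have hσ_mid : ∀ j (t : ℕ), t < m j → σ (Sum.inl (E j t)) = Sum.inl (E j (t + 1)) := by
    intro j t ht
    have hmem : Sum.inl (E j t) ∈ l j := by
      rw [hldef]
      exact List.mem_cons_of_mem _ (List.mem_map_of_mem (List.mem_range.mpr (by omega)))
    rw [hσl j _ hmem]
    have h := List.formPerm_apply_getElem (l j) (hlnodup j) (t + 1) (by rw [hllen]; omega)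
    rw [hgett j t (by omega)] at h
    rw [h]
    have h1 : (t + 1 + 1) % (l j).length = t + 2 := by
      rw [hllen]; exact Nat.mod_eq_of_lt (by omega)
    simp_rw [h1]
    simpa using hgett j (t + 1) (by omega)
  have hσ_last : ∀ j, σ (Sum.inl (E j (m j))) = Sum.inr j := by
    intro j
    have hmem : Sum.inl (E j (m j)) ∈ l j := by
      rw [hldef]
      exact List.mem_cons_of_mem _ (List.mem_map_of_mem (List.mem_range.mpr (by omega)))
    rw [hσl j _ hmem]
    have h := List.formPerm_apply_getElem (l j) (hlnodup j) (m j + 1) (by rw [hllen]; omega)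
    rw [hgett j (m j) (by omega)] at h
    rw [h]
    have h1 : (m j + 1 + 1) % (l j).length = 0 := by
      rw [hllen]; exact Nat.mod_self _
    simp_rw [h1]
    simpa using hget0 j
  -- cost bounds on the chain elements
  have sqb : ∀ (x c : ℝ), |x| ≤ c → x ^ 2 ≤ c ^ 2 := by
    intro x c h
    calc x ^ 2 = |x| ^ 2 := (sq_abs x).symm
      _ ≤ c ^ 2 := by
        have := abs_nonneg x
        nlinarith
  have hcost_inr : ∀ j, f (Sum.inr j) ≤ (L + δ) ^ 2 := by
    intro j
    rw [hfdef]
    simp only [hσ_inr j, Sum.elim_inl, Sum.elim_inr]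
    apply sqb
    have h1 := hE j 0 (by omega)
    rw [hkk0 j] at h1
    have h2 := hkbC j
    calc |α (E j 0) - b j| ≤ |α (E j 0) - p j (kb j)| + |p j (kb j) - b j| := abs_sub_le _ _ _
      _ ≤ L + δ := by linarith
  have hcost_mid : ∀ j (t : ℕ), t < m j → f (Sum.inl (E j t)) ≤ (L + 2 * δ) ^ 2 := by
    intro j t ht
    rw [hfdef]
    simp only [hσ_mid j t ht, Sum.elim_inl]
    apply sqb
    have h1 := hE j t (by omega)
    have h2 := hE j (t + 1) (by omega)
    have h3 := hkkstep j t
    calc |α (E j (t + 1)) - α (E j t)|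
        ≤ |α (E j (t + 1)) - p j (kk j (t + 1))| + |p j (kk j (t + 1)) - α (E j t)| :=
          abs_sub_le _ _ _
      _ ≤ |α (E j (t + 1)) - p j (kk j (t + 1))| + (|p j (kk j (t + 1)) - p j (kk j t)|
          + |p j (kk j t) - α (E j t)|) := by
          linarith [abs_sub_le (p j (kk j (t + 1))) (p j (kk j t)) (α (E j t))]
      _ ≤ L + 2 * δ := by
          rw [h3]
          rw [abs_sub_comm (p j (kk j t)) (α (E j t))] at *
          linarith
  have hcost_last : ∀ j, f (Sum.inl (E j (m j))) ≤ (L + δ) ^ 2 := by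
    intro j
    rw [hfdef]
    simp only [hσ_last j, Sum.elim_inl, Sum.elim_inr]
    apply sqb
    have h1 := hE j (m j) (le_refl _)
    rw [hkkm j] at h1
    have h2 := hkaC j
    calc |a j - α (E j (m j))| ≤ |a j - p j (ka j)| + |p j (ka j) - α (E j (m j))| :=
        abs_sub_le _ _ _
      _ ≤ L + δ := by
        rw [abs_sub_comm (a j) (p j (ka j)), abs_sub_comm (p j (ka j)) (α (E j (m j)))]
        linarith
  -- summation
  have hU : ∑ s : Fin n ⊕ Fin d, f s
      = ∑ j : Fin d, ∑ s ∈ (l j).toFinset, f s := by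
    rw [← Finset.sum_biUnion]
    · refine (Finset.sum_subset (Finset.subset_univ _) ?_).symm
      intro x _ hx
      refine hoff x (fun j hj => hx ?_)
      exact Finset.mem_biUnion.mpr ⟨j, Finset.mem_univ j, List.mem_toFinset.mpr hj⟩
    · intro j _ j' _ hjj
      refine Finset.disjoint_left.mpr (fun x hx hx' => ?_)
      exact hldisj j j' hjj (List.mem_toFinset.mp hx) (List.mem_toFinset.mp hx')
  have hchain : ∀ j, ∑ s ∈ (l j).toFinset, f s
      ≤ 2 * (L + δ) ^ 2 + (m j : ℝ) * (L + 2 * δ) ^ 2 := by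
    intro j
    rw [List.sum_toFinset _ (hlnodup j)]
    simp only [hldef, List.map_cons, List.map_map, List.sum_cons]
    have hrange : ∀ k : ℕ, ((List.range k).map (f ∘ fun t => Sum.inl (E j t))).sum
        = ∑ t ∈ Finset.range k, f (Sum.inl (E j t)) := by
      intro k
      induction k with
      | zero => simp
      | succ k ih =>
        rw [List.range_succ, List.map_append, List.sum_append, Finset.sum_range_succ, ih]
        simp
    rw [hrange, Finset.sum_range_succ]
    have hmid : ∑ t ∈ Finset.range (m j), f (Sum.inl (E j t))
        ≤ (m j : ℝ) * (L + 2 * δ) ^ 2 := by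
      calc ∑ t ∈ Finset.range (m j), f (Sum.inl (E j t))
          ≤ ∑ _t ∈ Finset.range (m j), (L + 2 * δ) ^ 2 :=
            Finset.sum_le_sum (fun t ht => hcost_mid j t (Finset.mem_range.mp ht))
        _ = (m j : ℝ) * (L + 2 * δ) ^ 2 := by
            rw [Finset.sum_const, Finset.card_range, nsmul_eq_mul]
    linarith [hcost_inr j, hcost_last j, hmid]
  have hmlast : ∀ j, (m j : ℝ) * (L + 2 * δ) ^ 2 ≤ π / 2 * (L + 2 * δ) ^ 2 / L := by
    intro j
    rw [le_div_iff₀ hLpos]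
    have h1 := hmL j
    nlinarith [sq_nonneg (L + 2 * δ)]
  have htot : ∑ s : Fin n ⊕ Fin d, f s
      ≤ (d : ℝ) * (2 * (L + δ) ^ 2 + π / 2 * (L + 2 * δ) ^ 2 / L) := by
    rw [hU]
    calc ∑ j : Fin d, ∑ s ∈ (l j).toFinset, f s
        ≤ ∑ _j : Fin d, (2 * (L + δ) ^ 2 + π / 2 * (L + 2 * δ) ^ 2 / L) :=
          Finset.sum_le_sum (fun j _ => le_trans (hchain j) (by linarith [hmlast j]))
      _ = (d : ℝ) * (2 * (L + δ) ^ 2 + π / 2 * (L + 2 * δ) ^ 2 / L) := by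
          rw [Finset.sum_const, Finset.card_univ, Fintype.card_fin, nsmul_eq_mul]
  refine le_trans htot ?_
  have hLval : L = 3 * (d : ℝ) * δ := by rw [hLdef, hHdef]; ring
  rw [hLval]
  have hD1 : (1 : ℝ) ≤ (d : ℝ) := by exact_mod_cast hd
  have hdiv : π / 2 * (3 * (d : ℝ) * δ + 2 * δ) ^ 2 / (3 * (d : ℝ) * δ)
      ≤ 25 * π * (d : ℝ) * δ / 6 := by
    rw [div_le_iff₀ (by positivity)]
    have hkey : (0 : ℝ) ≤ π * δ ^ 2 * (((d : ℝ) - 1) * (4 * (d : ℝ) + 1)) := by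
      apply mul_nonneg (by positivity)
      apply mul_nonneg (by linarith) (by positivity)
    nlinarith [hkey]
  have hsq : 2 * (3 * (d : ℝ) * δ + δ) ^ 2 ≤ 32 * (d : ℝ) ^ 2 * δ ^ 2 := by
    nlinarith [sq_nonneg (((d : ℝ) - 1) * δ), mul_nonneg (sub_nonneg.mpr hD1) hδ.le]
  calc (d : ℝ) * (2 * (3 * (d : ℝ) * δ + δ) ^ 2
        + π / 2 * (3 * (d : ℝ) * δ + 2 * δ) ^ 2 / (3 * (d : ℝ) * δ))
      ≤ (d : ℝ) * (32 * (d : ℝ) ^ 2 * δ ^ 2 + 25 * π * (d : ℝ) * δ / 6) := by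
        apply mul_le_mul_of_nonneg_left _ (by positivity)
        linarith [hdiv, hsq]
    _ = 32 * (d : ℝ) ^ 3 * δ ^ 2 + 25 * π * (d : ℝ) ^ 2 * δ / 6 := by ring

end Core

section Final
open Real

set_option maxHeartbeats 1600000 in
theorem gaussian_embezzlement_main {n d : ℕ} (ε : ℝ) (hε : 0 < ε)
    (K : Matrix (Fin n) (Fin n) ℂ)
    (hK : K.PosSemidef) (hK1 : (1 - K).PosSemidef)
    (hdense : ∀ x ∈ Set.Icc (0 : ℝ) 1, ∃ j, |hK.1.eigenvalues j - x| < ε)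
    (F G : Matrix (Fin d) (Fin d) ℂ)
    (hF : F.PosSemidef) (hF1 : (1 - F).PosSemidef)
    (hG : G.PosSemidef) (hG1 : (1 - G).PosSemidef) :
    ∃ u : Matrix (Fin n ⊕ Fin d) (Fin n ⊕ Fin d) ℂ,
      u ∈ Matrix.unitaryGroup (Fin n ⊕ Fin d) ℂ ∧
      Real.sqrt 2 * eta (u * Matrix.fromBlocks K 0 0 F * uᴴ) (Matrix.fromBlocks K 0 0 G) ≤
        11 * d * ε ^ ((1 : ℝ) / 4) := by
  classical
  have hpi := Real.pi_pos
  set κ : Fin n → ℝ := hK.1.eigenvalues with hκdef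
  set φv : Fin d → ℝ := hF.1.eigenvalues with hφdef
  set γv : Fin d → ℝ := hG.1.eigenvalues with hγdef
  have hκI : ∀ i, κ i ∈ Set.Icc (0 : ℝ) 1 := fun i => eigenvalues_mem_Icc hK hK1 i
  have hφI : ∀ j, φv j ∈ Set.Icc (0 : ℝ) 1 := fun j => eigenvalues_mem_Icc hF hF1 j
  have hγI : ∀ j, γv j ∈ Set.Icc (0 : ℝ) 1 := fun j => eigenvalues_mem_Icc hG hG1 j
  set v : Fin n ⊕ Fin d → ℝ := Sum.elim κ φv with hvdef
  set w : Fin n ⊕ Fin d → ℝ := Sum.elim κ γv with hwdef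
  have hvI : ∀ s, v s ∈ Set.Icc (0 : ℝ) 1 := by rintro (i | j); exacts [hκI i, hφI j]
  have hwI : ∀ s, w s ∈ Set.Icc (0 : ℝ) 1 := by rintro (i | j); exacts [hκI i, hγI j]
  set δ : ℝ := π / 2 * Real.sqrt ε with hδdef
  have hδpos : 0 < δ := by
    have := Real.sqrt_pos.mpr hε
    positivity
  have hsε : 0 < Real.sqrt ε := Real.sqrt_pos.mpr hε
  -- key: find a permutation with small cost
  have hmain : ∃ σ : Equiv.Perm (Fin n ⊕ Fin d),
      ∑ s : Fin n ⊕ Fin d,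
        (Real.sqrt (1 - v (σ s)) * Real.sqrt (w s)
          - Real.sqrt (v (σ s)) * Real.sqrt (1 - w s)) ^ 2
        ≤ 121 / 2 * (d : ℝ) ^ 2 * Real.sqrt ε := by
    have hterm_le : ∀ (σ : Equiv.Perm (Fin n ⊕ Fin d)) (s : Fin n ⊕ Fin d),
        (Real.sqrt (1 - v (σ s)) * Real.sqrt (w s)
          - Real.sqrt (v (σ s)) * Real.sqrt (1 - w s)) ^ 2
          ≤ (ang (w s) - ang (v (σ s))) ^ 2 := by
      intro σ s
      have h := hfun_abs_le_ang (hvI (σ s)).1 (hvI (σ s)).2 (hwI s).1 (hwI s).2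
      calc _ = |Real.sqrt (1 - v (σ s)) * Real.sqrt (w s)
            - Real.sqrt (v (σ s)) * Real.sqrt (1 - w s)| ^ 2 := (sq_abs _).symm
        _ ≤ |ang (w s) - ang (v (σ s))| ^ 2 := by
            have h0 := abs_nonneg (Real.sqrt (1 - v (σ s)) * Real.sqrt (w s)
              - Real.sqrt (v (σ s)) * Real.sqrt (1 - w s))
            nlinarith
        _ = (ang (w s) - ang (v (σ s))) ^ 2 := sq_abs _
    have hterm_le1 : ∀ (σ : Equiv.Perm (Fin n ⊕ Fin d)) (s : Fin n ⊕ Fin d),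
        (Real.sqrt (1 - v (σ s)) * Real.sqrt (w s)
          - Real.sqrt (v (σ s)) * Real.sqrt (1 - w s)) ^ 2 ≤ 1 := by
      intro σ s
      have h := hfun_abs_le_one (hvI (σ s)).1 (hvI (σ s)).2 (hwI s).1 (hwI s).2
      calc _ = |Real.sqrt (1 - v (σ s)) * Real.sqrt (w s)
            - Real.sqrt (v (σ s)) * Real.sqrt (1 - w s)| ^ 2 := (sq_abs _).symm
        _ ≤ 1 := by nlinarith [abs_nonneg (Real.sqrt (1 - v (σ s)) * Real.sqrt (w s)
            - Real.sqrt (v (σ s)) * Real.sqrt (1 - w s))]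
    by_cases hreg : 0 < d ∧ 3 * (d : ℝ) * δ ≤ π / 2
    · -- chain regime
      obtain ⟨hd, hL⟩ := hreg
      have hangdense : ∀ ψ ∈ Set.Icc (0 : ℝ) (π / 2), ∃ i, |ang (κ i) - ψ| < δ := by
        intro ψ hψ
        have hsψ : Real.sin ψ ^ 2 ∈ Set.Icc (0 : ℝ) 1 := by
          constructor
          · positivity
          · nlinarith [Real.sin_le_one ψ, Real.neg_one_le_sin ψ]
        obtain ⟨i, hi⟩ := hdense _ hsψ
        refine ⟨i, ?_⟩
        have hspread := sin_sq_spread (ang_mem (hκI i).1) hψ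
        have hsinang : Real.sin (ang (κ i)) ^ 2 = κ i := by
          rw [sin_ang (hκI i).1 (hκI i).2, Real.sq_sqrt (hκI i).1]
        rw [hsinang] at hspread
        have hlt : (2 / π) ^ 2 * (ang (κ i) - ψ) ^ 2 < ε := lt_of_le_of_lt hspread hi
        have h2 : (ang (κ i) - ψ) ^ 2 < δ ^ 2 := by
          have hd2 : δ ^ 2 = π ^ 2 / 4 * ε := by
            rw [hδdef, mul_pow, Real.sq_sqrt hε.le]
            ring
          have hrw : (ang (κ i) - ψ) ^ 2
              = π ^ 2 / 4 * ((2 / π) ^ 2 * (ang (κ i) - ψ) ^ 2) := by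
            field_simp
            ring
          rw [hd2, hrw]
          exact mul_lt_mul_of_pos_left hlt (by positivity)
        exact abs_lt_of_sq_lt_sq h2 hδpos.le
      obtain ⟨σ, hσ⟩ := core_perm hd hδpos hL (fun i => ang (κ i)) hangdense
        (fun j => ang (φv j)) (fun j => ang (γv j))
        (fun j => ang_mem (hφI j).1) (fun j => ang_mem (hγI j).1)
      refine ⟨σ, ?_⟩
      have helim1 : ∀ s, Sum.elim (fun i => ang (κ i)) (fun j => ang (φv j)) s = ang (v s) := by
        rintro (i | j) <;> rfl
      have helim2 : ∀ s, Sum.elim (fun i => ang (κ i)) (fun j => ang (γv j)) s = ang (w s) := by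
        rintro (i | j) <;> rfl
      have hsum1 : ∑ s : Fin n ⊕ Fin d,
          (Real.sqrt (1 - v (σ s)) * Real.sqrt (w s)
            - Real.sqrt (v (σ s)) * Real.sqrt (1 - w s)) ^ 2
          ≤ ∑ s : Fin n ⊕ Fin d, (Sum.elim (fun i => ang (κ i)) (fun j => ang (φv j)) (σ s)
              - Sum.elim (fun i => ang (κ i)) (fun j => ang (γv j)) s) ^ 2 := by
        refine Finset.sum_le_sum (fun s _ => ?_)
        rw [helim1, helim2]
        calc _ ≤ (ang (w s) - ang (v (σ s))) ^ 2 := hterm_le σ s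
          _ = (ang (v (σ s)) - ang (w s)) ^ 2 := by ring
      refine le_trans hsum1 (le_trans hσ ?_)
      -- numeric: 32 d³ δ² + 25 π d² δ / 6 ≤ 121/2 d² √ε  given 3 d δ ≤ π/2, δ = π/2 √ε
      have hπlt : π < 3.15 := Real.pi_lt_d2
      have hd1 : (1 : ℝ) ≤ (d : ℝ) := by exact_mod_cast hd
      have hδval : δ = π / 2 * Real.sqrt ε := hδdef
      have hkey : 3 * (d : ℝ) * (π / 2 * Real.sqrt ε) ≤ π / 2 := by rw [← hδval]; exact hL
      have hdse : (d : ℝ) * Real.sqrt ε ≤ 1 / 3 := by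
        have h1 : (π / 2) * (3 * ((d : ℝ) * Real.sqrt ε)) ≤ (π / 2) * 1 := by
          nlinarith [hkey]
        have h2 := (mul_le_mul_iff_right₀ (by positivity : (0 : ℝ) < π / 2)).mp h1
        linarith
      rw [hδval]
      have hδsq : (π / 2 * Real.sqrt ε) ^ 2 = π ^ 2 / 4 * ε := by
        rw [mul_pow, Real.sq_sqrt hε.le]; ring
      have hε14 : (d : ℝ) ^ 3 * ε = ((d : ℝ) ^ 2 * Real.sqrt ε) * ((d : ℝ) * Real.sqrt ε) := by
        have hse : Real.sqrt ε * Real.sqrt ε = ε := Real.mul_self_sqrt hε.le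
        calc (d : ℝ) ^ 3 * ε = (d : ℝ) ^ 3 * (Real.sqrt ε * Real.sqrt ε) := by rw [hse]
          _ = _ := by ring
      calc 32 * (d : ℝ) ^ 3 * (π / 2 * Real.sqrt ε) ^ 2
            + 25 * π * (d : ℝ) ^ 2 * (π / 2 * Real.sqrt ε) / 6
          = 8 * π ^ 2 * ((d : ℝ) ^ 3 * ε)
            + 25 * π ^ 2 / 12 * ((d : ℝ) ^ 2 * Real.sqrt ε) := by
            rw [hδsq]; ring
        _ ≤ 121 / 2 * (d : ℝ) ^ 2 * Real.sqrt ε := by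
            rw [hε14]
            have hA : (0 : ℝ) ≤ (d : ℝ) ^ 2 * Real.sqrt ε := by positivity
            have hπsq : π ^ 2 ≤ 9.9225 := by nlinarith [hπlt, hpi]
            have hAB := mul_le_mul_of_nonneg_left hdse hA
            nlinarith [mul_le_mul_of_nonneg_left hAB (sq_nonneg π),
              mul_le_mul_of_nonneg_right hπsq hA, hA]
    · -- trivial regime: identity permutation
      refine ⟨1, ?_⟩
      have hsplit : ∑ s : Fin n ⊕ Fin d,
          (Real.sqrt (1 - v ((1 : Equiv.Perm (Fin n ⊕ Fin d)) s)) * Real.sqrt (w s)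
            - Real.sqrt (v ((1 : Equiv.Perm (Fin n ⊕ Fin d)) s)) * Real.sqrt (1 - w s)) ^ 2
          ≤ (d : ℝ) := by
        rw [Fintype.sum_sum_type]
        have hinl : ∀ i : Fin n,
            (Real.sqrt (1 - v ((1 : Equiv.Perm (Fin n ⊕ Fin d)) (Sum.inl i))) *
              Real.sqrt (w (Sum.inl i))
              - Real.sqrt (v ((1 : Equiv.Perm (Fin n ⊕ Fin d)) (Sum.inl i))) *
              Real.sqrt (1 - w (Sum.inl i))) ^ 2 = 0 := by
          intro i
          have h1 : (1 : Equiv.Perm (Fin n ⊕ Fin d)) (Sum.inl i) = Sum.inl i := rfl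
          rw [h1]
          have : v (Sum.inl i) = w (Sum.inl i) := rfl
          rw [this]
          ring
        rw [Finset.sum_congr rfl (fun i _ => hinl i), Finset.sum_const_zero, zero_add]
        calc ∑ j : Fin d, (Real.sqrt (1 - v ((1 : Equiv.Perm (Fin n ⊕ Fin d)) (Sum.inr j))) *
              Real.sqrt (w (Sum.inr j))
              - Real.sqrt (v ((1 : Equiv.Perm (Fin n ⊕ Fin d)) (Sum.inr j))) *
              Real.sqrt (1 - w (Sum.inr j))) ^ 2
            ≤ ∑ _j : Fin d, (1 : ℝ) := Finset.sum_le_sum (fun j _ => hterm_le1 1 (Sum.inr j))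
          _ = (d : ℝ) := by simp
      refine le_trans hsplit ?_
      -- need d ≤ 121/2 d² √ε  when ¬(0 < d ∧ 3 d δ ≤ π/2)
      rcases Nat.eq_zero_or_pos d with hd0 | hd
      · subst hd0
        simp
      · have hd1 : (1 : ℝ) ≤ (d : ℝ) := by exact_mod_cast hd
        have hnL : ¬(3 * (d : ℝ) * δ ≤ π / 2) := by
          intro hc
          exact hreg ⟨hd, hc⟩
        push_neg at hnL
        have hdse : 1 / 3 < (d : ℝ) * Real.sqrt ε := by
          rw [hδdef] at hnL
          have h1 : (π / 2) * 1 < (π / 2) * (3 * ((d : ℝ) * Real.sqrt ε)) := by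
            nlinarith [hnL]
          have h2 := (mul_lt_mul_iff_right₀ (by positivity : (0 : ℝ) < π / 2)).mp h1
          linarith
        have hA : (0 : ℝ) ≤ (d : ℝ) := by positivity
        nlinarith [mul_le_mul_of_nonneg_left hdse.le hA]
  obtain ⟨σ, hσ⟩ := hmain
  obtain ⟨u, hu, hueq⟩ := exists_unitary_eta_eq K hK hK1 F hF hF1 G hG hG1 σ
  refine ⟨u, hu, ?_⟩
  rw [hueq]
  have hsum_nonneg : (0 : ℝ) ≤ ∑ s : Fin n ⊕ Fin d,
      (Real.sqrt (1 - Sum.elim hK.1.eigenvalues hF.1.eigenvalues (σ s)) *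
        Real.sqrt (Sum.elim hK.1.eigenvalues hG.1.eigenvalues s)
        - Real.sqrt (Sum.elim hK.1.eigenvalues hF.1.eigenvalues (σ s)) *
        Real.sqrt (1 - Sum.elim hK.1.eigenvalues hG.1.eigenvalues s)) ^ 2 :=
    Finset.sum_nonneg (fun s _ => sq_nonneg _)
  rw [← Real.sqrt_mul (by norm_num : (0 : ℝ) ≤ 2)]
  have hbound : 2 * ∑ s : Fin n ⊕ Fin d,
      (Real.sqrt (1 - Sum.elim hK.1.eigenvalues hF.1.eigenvalues (σ s)) *
        Real.sqrt (Sum.elim hK.1.eigenvalues hG.1.eigenvalues s)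
        - Real.sqrt (Sum.elim hK.1.eigenvalues hF.1.eigenvalues (σ s)) *
        Real.sqrt (1 - Sum.elim hK.1.eigenvalues hG.1.eigenvalues s)) ^ 2
      ≤ 121 * (d : ℝ) ^ 2 * Real.sqrt ε := by
    have := hσ
    linarith
  refine le_trans (Real.sqrt_le_sqrt hbound) (le_of_eq ?_)
  rw [show (121 : ℝ) * (d : ℝ) ^ 2 * Real.sqrt ε
      = (11 * (d : ℝ)) ^ 2 * Real.sqrt ε by ring]
  rw [Real.sqrt_mul (by positivity) (Real.sqrt ε)]
  rw [Real.sqrt_sq (by positivity)]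
  congr 1
  rw [show ((1 : ℝ) / 4) = (1 / 2) * (1 / 2) by norm_num]
  rw [Real.rpow_mul hε.le]
  rw [← Real.sqrt_eq_rpow, ← Real.sqrt_eq_rpow]

end Final
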